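/- arXiv:2605.13019 — 2 statements merged into one kernel-verified Lean document; each statement's English description precedes it below -/
import Mathlib

section
/- Let G₁ = (V₁, E₁) and G₂ = (V₂, E₂) be finite graphs with quantizations S_k := span{|v⟩⟨w| : (v,w) ∈ E_k}. Let f : V₂ → V₁ be a function and θ : ℓ∞(V₁) → ℓ∞(V₂) the induced *-homomorphism g ↦ g ∘ f. Then f is a graph homomorphism (i.e., (v,w) ∈ E₂ implies (f(v), f(w)) ∈ E₁) if and only if (θ ⊗ θ)(Ann(S₁)) ⊆ Ann(S₂). -/
/-! Each operator `Phi z` acts diagonally on the matrix units: `Phi z |v⟩⟨w| = z(v, w) |v⟩⟨w|`,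
where `z(v, w)` is `z` read as a function on `V × V`. Hence `Ann(S)` consists of the `z` vanishing
on the edge set, and `θ ⊗ θ` is precomposition with `f × f`, so an edge-preserving `f` maps
annihilators into annihilators. Conversely, if `(v, w) ∈ E₂` but `(f v, f w) ∉ E₁`, the point mass
at `(f v, f w)` lies in `Ann(S₁)`, while its image takes the value `1` at the edge `(v, w)`. -/

open TensorProduct Matrix

/-- The map `Φ` sending `x ⊗ y ∈ ℓ∞(V) ⊗ ℓ∞(V)` to the operator `T ↦ x T y` on
`B(ℓ²(V))`, with `ℓ∞(V)` acting by pointwise (diagonal) multiplication. -/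
noncomputable def Phi {V : Type*} [Fintype V] [DecidableEq V] :
    (V → ℂ) ⊗[ℂ] (V → ℂ) →ₗ[ℂ] Matrix V V ℂ →ₗ[ℂ] Matrix V V ℂ :=
  TensorProduct.lift
  { toFun := fun x =>
      { toFun := fun y =>
          (LinearMap.mulLeft ℂ (Matrix.diagonal x)).comp
            (LinearMap.mulRight ℂ (Matrix.diagonal y))
        map_add' := fun y₁ y₂ => by
          ext T
          simp [Matrix.diagonal_add, Matrix.mul_add]
          ring
        map_smul' := fun c y => by
          ext T
          simp [Matrix.diagonal_smul, Matrix.mul_smul] }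
    map_add' := fun x₁ x₂ => by
      ext y T
      simp [Matrix.diagonal_add, Matrix.add_mul]
      ring
    map_smul' := fun c x => by
      ext y T
      simp [Matrix.diagonal_smul, smul_mul_assoc] }

/-- The quantization `S = span{|v⟩⟨w| : (v,w) ∈ E}` of an edge set `E`. -/
noncomputable def quantization {V : Type*} [Fintype V] [DecidableEq V] (E : Set (V × V)) :
    Submodule ℂ (Matrix V V ℂ) :=
  Submodule.span ℂ {M : Matrix V V ℂ | ∃ p ∈ E, M = Matrix.single p.1 p.2 1}

/-- The annihilator of a subspace `S ⊆ B(ℓ²(V))` inside `ℓ∞(V) ⊗ ℓ∞(V)`. -/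
def Ann {V : Type*} [Fintype V] [DecidableEq V] (S : Submodule ℂ (Matrix V V ℂ)) :
    Set ((V → ℂ) ⊗[ℂ] (V → ℂ)) :=
  {z | ∀ T ∈ S, Phi z T = 0}

/-- Evaluation at `(v, w)`, identifying `(V → R) ⊗ (W → R)` with functions on `V × W`. -/
def tensorEval {R V W : Type*} [CommSemiring R] (v : V) (w : W) :
    (V → R) ⊗[R] (W → R) →ₗ[R] R :=
  TensorProduct.lift ((LinearMap.mul R R).compl₁₂ (LinearMap.proj v) (LinearMap.proj w))

@[simp]
lemma tensorEval_tmul {R V W : Type*} [CommSemiring R] (v : V) (w : W) (x : V → R)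
    (y : W → R) : tensorEval v w (x ⊗ₜ y) = x v * y w := by
  simp [tensorEval]

lemma tensorEval_map_funLeft {R V₁ V₂ W₁ W₂ : Type*} [CommSemiring R] (f : V₂ → V₁)
    (g : W₂ → W₁) (v : V₂) (w : W₂) (z : (V₁ → R) ⊗[R] (W₁ → R)) :
    tensorEval v w (TensorProduct.map (LinearMap.funLeft R R f) (LinearMap.funLeft R R g) z) =
      tensorEval (f v) (g w) z := by
  induction z using TensorProduct.induction_on with
  | zero => simp
  | tmul x y => simp [LinearMap.funLeft]
  | add a b ha hb => simp [ha, hb]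

lemma tensorEval_single_tmul_single {R V W : Type*} [CommSemiring R] [DecidableEq V]
    [DecidableEq W] (v a : V) (w b : W) :
    tensorEval a b (Pi.single v (1 : R) ⊗ₜ Pi.single w (1 : R)) =
      if (a, b) = (v, w) then 1 else 0 := by
  by_cases ha : a = v <;> by_cases hb : b = w <;> simp [ha, hb]

lemma Phi_tmul_apply {V : Type*} [Fintype V] [DecidableEq V] (x y : V → ℂ)
    (T : Matrix V V ℂ) : Phi (x ⊗ₜ y) T = diagonal x * T * diagonal y :=
  (Matrix.mul_assoc _ _ _).symm

lemma Phi_apply_single {V : Type*} [Fintype V] [DecidableEq V] (v w : V)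
    (z : (V → ℂ) ⊗[ℂ] (V → ℂ)) :
    Phi z (single v w 1) = tensorEval v w z • single v w 1 := by
  induction z using TensorProduct.induction_on with
  | zero => simp
  | tmul x y =>
    ext i j
    rw [Phi_tmul_apply, mul_diagonal, diagonal_mul, tensorEval_tmul]
    rcases eq_or_ne v i with rfl | hi <;> rcases eq_or_ne w j with rfl | hj <;>
      simp [*]
  | add a b ha hb => simp [ha, hb, add_smul]

lemma mem_Ann_quantization_iff {V : Type*} [Fintype V] [DecidableEq V] (E : Set (V × V))
    (z : (V → ℂ) ⊗[ℂ] (V → ℂ)) :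
    z ∈ Ann (quantization E) ↔ ∀ v w : V, (v, w) ∈ E → tensorEval v w z = 0 := by
  constructor
  · intro hz v w hvw
    have hPhi := hz (single v w 1) (Submodule.subset_span ⟨(v, w), hvw, rfl⟩)
    rw [Phi_apply_single] at hPhi
    simpa using congrFun (congrFun hPhi v) w
  · intro h T hT
    induction hT using Submodule.span_induction with
    | mem M hM =>
      obtain ⟨⟨v, w⟩, hvw, rfl⟩ := hM
      rw [Phi_apply_single, h v w hvw, zero_smul]
    | zero => exact map_zero _
    | add a b _ _ ha hb => rw [map_add, ha, hb, add_zero]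
    | smul c a _ ha => rw [map_smul, ha, smul_zero]

lemma single_tmul_single_mem_Ann_quantization_iff {V : Type*} [Fintype V] [DecidableEq V]
    (E : Set (V × V)) (v w : V) :
    Pi.single v 1 ⊗ₜ Pi.single w 1 ∈ Ann (quantization E) ↔ (v, w) ∉ E := by
  rw [mem_Ann_quantization_iff]
  constructor
  · intro h hvw
    simpa [tensorEval_single_tmul_single] using h v w hvw
  · rintro hvw a b hab
    rw [tensorEval_single_tmul_single, if_neg]
    rintro heq
    exact hvw (heq ▸ hab)

/-- `f : V₂ → V₁` is a graph homomorphism iff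
`(θ ⊗ θ)(Ann(S₁)) ⊆ Ann(S₂)`, where `θ : ℓ∞(V₁) → ℓ∞(V₂)`, `θ g = g ∘ f`. -/
theorem stmt_1 {V₁ V₂ : Type*} [Fintype V₁] [DecidableEq V₁] [Fintype V₂] [DecidableEq V₂]
    (E₁ : Set (V₁ × V₁)) (E₂ : Set (V₂ × V₂)) (f : V₂ → V₁) :
    (∀ v w : V₂, (v, w) ∈ E₂ → (f v, f w) ∈ E₁) ↔
      (TensorProduct.map (LinearMap.funLeft ℂ ℂ f) (LinearMap.funLeft ℂ ℂ f)) ''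
          Ann (quantization E₁) ⊆ Ann (quantization E₂) := by
  rw [Set.image_subset_iff]
  constructor
  · intro hf z hz
    rw [mem_Ann_quantization_iff] at hz
    rw [Set.mem_preimage, mem_Ann_quantization_iff]
    intro v w hvw
    rw [tensorEval_map_funLeft]
    exact hz _ _ (hf v w hvw)
  · intro h v w hvw
    by_contra hne
    have hz := h ((single_tmul_single_mem_Ann_quantization_iff E₁ _ _).2 hne)
    rw [Set.mem_preimage, mem_Ann_quantization_iff] at hz
    simpa [tensorEval_map_funLeft] using hz v w hvw
end

section
/- Let A, B ∈ B(H₁) be positive operators, T ∈ B(H₂), and K_i, K_j ∈ B(H₂, H₁) bounded operators between Hilbert spaces. Then (K_i† A K_i) T (K_j† B K_j) = 0 if and only if (A K_i) T (K_j† B) = 0. -/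
/-!
Factor the positive operators as `A = S† S` and `B = R† R`. The hypothesis then reads
`(S Kᵢ)† (S Kᵢ) T (R Kⱼ)† (R Kⱼ) = 0`, and since `f† f g = 0` forces `f g = 0` (look at
`(f g)† (f g) = g† f† f g`), both outer factors cancel, leaving `S Kᵢ T (R Kⱼ)† = 0`.
Multiplying by `S†` on the left and by `R` on the right gives `A Kᵢ T Kⱼ† B = 0`.
-/

open ContinuousLinearMap

namespace ContinuousLinearMap

section

variable {𝕜 E F G : Type*} [RCLike 𝕜]
  [NormedAddCommGroup E] [InnerProductSpace 𝕜 E] [CompleteSpace E]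
  [NormedAddCommGroup F] [InnerProductSpace 𝕜 F] [CompleteSpace F]
  [NormedAddCommGroup G] [InnerProductSpace 𝕜 G] [CompleteSpace G]

theorem adjoint_comp_comp_eq_zero_iff {f : F →L[𝕜] G} {g : E →L[𝕜] F} :
    adjoint f ∘L (f ∘L g) = 0 ↔ f ∘L g = 0 := by
  refine ⟨fun h => ?_, fun h => by rw [h, comp_zero]⟩
  rw [← adjoint_comp_self_eq_zero_iff, adjoint_comp, comp_assoc, h, comp_zero]

theorem comp_adjoint_comp_eq_zero_iff {f : E →L[𝕜] F} {g : E →L[𝕜] G} :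
    (g ∘L adjoint f) ∘L f = 0 ↔ g ∘L adjoint f = 0 := by
  rw [← EmbeddingLike.map_eq_zero_iff (f := adjoint), adjoint_comp, adjoint_comp, adjoint_adjoint,
    adjoint_comp_comp_eq_zero_iff, ← EmbeddingLike.map_eq_zero_iff (f := adjoint), adjoint_comp,
    adjoint_adjoint]

end

theorem IsPositive.exists_eq_adjoint_comp_self {E : Type*} [NormedAddCommGroup E]
    [InnerProductSpace ℂ E] [CompleteSpace E] {A : E →L[ℂ] E} (hA : A.IsPositive) :
    ∃ S : E →L[ℂ] E, A = adjoint S ∘L S := by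
  obtain ⟨S, hS⟩ := CStarAlgebra.nonneg_iff_eq_star_mul_self.mp ((nonneg_iff_isPositive A).mpr hA)
  exact ⟨S, by rw [hS, star_eq_adjoint, mul_def]⟩

end ContinuousLinearMap

/-- for positive `A, B ∈ B(H₁)`, `T ∈ B(H₂)` and `K_i, K_j ∈ B(H₂, H₁)`,
`(K_i† A K_i) T (K_j† B K_j) = 0` iff `(A K_i) T (K_j† B) = 0`. -/
theorem stmt_4 {H₁ H₂ : Type*}
    [NormedAddCommGroup H₁] [InnerProductSpace ℂ H₁] [CompleteSpace H₁]
    [NormedAddCommGroup H₂] [InnerProductSpace ℂ H₂] [CompleteSpace H₂]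
    (A B : H₁ →L[ℂ] H₁) (hA : A.IsPositive) (hB : B.IsPositive)
    (T : H₂ →L[ℂ] H₂) (Ki Kj : H₂ →L[ℂ] H₁) :
    ((adjoint Ki).comp (A.comp Ki)).comp (T.comp ((adjoint Kj).comp (B.comp Kj))) = 0 ↔
      (A.comp Ki).comp (T.comp ((adjoint Kj).comp B)) = 0 := by
  obtain ⟨S, rfl⟩ := hA.exists_eq_adjoint_comp_self
  obtain ⟨R, rfl⟩ := hB.exists_eq_adjoint_comp_self
  constructor
  · intro h
    have hcancel_left : (S ∘L Ki) ∘L (T ∘L adjoint (R ∘L Kj) ∘L (R ∘L Kj)) = 0 :=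
      adjoint_comp_comp_eq_zero_iff.mp (by simpa only [adjoint_comp, comp_assoc] using h)
    have hcancel_right : ((S ∘L Ki) ∘L T) ∘L adjoint (R ∘L Kj) = 0 :=
      comp_adjoint_comp_eq_zero_iff.mp (by simpa only [comp_assoc] using hcancel_left)
    simpa only [adjoint_comp, adjoint_adjoint, comp_assoc, zero_comp, comp_zero] using
      congrArg (fun X => adjoint S ∘L X ∘L R) hcancel_right
  · intro h
    simpa only [comp_assoc, zero_comp, comp_zero] using
      congrArg (fun X => adjoint Ki ∘L X ∘L Kj) h
end
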